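/- arXiv:1509.08070 — 3 statements merged into one kernel-verified Lean document; each statement's English description precedes it below -/
import Mathlib

section
/- Let x_5 < x_4 < x_3 < x_2 < x_1 < x_0 be reals in [a,b], let f ∈ Δ³[a,b], and let y ∈ (x_3, x_2). Set Δ_j := [x_j, x_{j-1}, x_{j-2}, x_{j-3}; f] for j = 3, 4, 5. Then Δ_4 ≤ ((y−x_4)(x_2−x_5))/((x_2−y)(x_1−x_4))·Δ_5 + ((x_1−y)(x_0−x_3))/((y−x_3)(x_1−x_4))·Δ_3. -/
/-!
Every third divided difference satisfies `(v - u) [u, s, t, v; f] = [v, s, t; f] - [u, s, t; f]`,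
so inserting a point `w` between `u` and `v` telescopes:
`(v - u) [u, s, t, v; f] = (w - u) [u, s, t, w; f] + (v - w) [w, s, t, v; f]`.
Inserting `y` into `Δ₄` gives
`(x₁ - x₄) Δ₄ = (y - x₄) [y, x₄, x₃, x₂; f] + (x₁ - y) [x₃, x₂, x₁, y; f]`.
Inserting `y` into `Δ₅` and `Δ₃` writes `(x₂ - x₅) Δ₅` and `(x₀ - x₃) Δ₃` as `(x₂ - y)` and
`(y - x₃)` times these two pieces plus nonnegative multiples of `[x₅, x₄, x₃, y; f]` and
`[y, x₂, x₁, x₀; f]`, which are nonnegative by 3-monotonicity.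
-/

/-- Third-order divided difference `[t0, t1, t2, t3; f]` at four (distinct) points. -/
noncomputable def dd4 (f : ℝ → ℝ) (t0 t1 t2 t3 : ℝ) : ℝ :=
  f t0 / ((t0 - t1) * (t0 - t2) * (t0 - t3)) +
  f t1 / ((t1 - t0) * (t1 - t2) * (t1 - t3)) +
  f t2 / ((t2 - t0) * (t2 - t1) * (t2 - t3)) +
  f t3 / ((t3 - t0) * (t3 - t1) * (t3 - t2))

/-- `f ∈ Δ³[a,b]`: `f` is continuous on `[a,b]` and all its third divided differences
over four distinct points of `[a,b]` are nonnegative (3-monotone). -/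
def Delta3 (a b : ℝ) (f : ℝ → ℝ) : Prop :=
  ContinuousOn f (Set.Icc a b) ∧
  ∀ t0 t1 t2 t3 : ℝ, t0 ∈ Set.Icc a b → t1 ∈ Set.Icc a b →
    t2 ∈ Set.Icc a b → t3 ∈ Set.Icc a b →
    t0 ≠ t1 → t0 ≠ t2 → t0 ≠ t3 → t1 ≠ t2 → t1 ≠ t3 → t2 ≠ t3 →
    0 ≤ dd4 f t0 t1 t2 t3

noncomputable def dd3 (f : ℝ → ℝ) (t0 t1 t2 : ℝ) : ℝ :=
  f t0 / ((t0 - t1) * (t0 - t2)) + f t1 / ((t1 - t0) * (t1 - t2)) +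
  f t2 / ((t2 - t0) * (t2 - t1))

theorem dd4_rotate (f : ℝ → ℝ) (t0 t1 t2 t3 : ℝ) :
    dd4 f t3 t0 t1 t2 = dd4 f t0 t1 t2 t3 := by
  unfold dd4
  ring

theorem sub_mul_dd4 (f : ℝ → ℝ) {u s t v : ℝ} (hsu : s ≠ u) (hsv : s ≠ v) (htu : t ≠ u)
    (htv : t ≠ v) : (v - u) * dd4 f u s t v = dd3 f v s t - dd3 f u s t := by
  rcases eq_or_ne u v with rfl | huv
  · simp
  rcases eq_or_ne s t with rfl | hst
  · simp only [dd4, dd3, sub_self, mul_zero, zero_mul, div_zero, add_zero]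
    field_simp [sub_ne_zero.2 hsu, sub_ne_zero.2 hsv, sub_ne_zero.2 huv]
    ring
  unfold dd4 dd3
  field_simp [sub_ne_zero.2 hsu, sub_ne_zero.2 hsv, sub_ne_zero.2 htu, sub_ne_zero.2 htv,
    sub_ne_zero.2 huv, sub_ne_zero.2 hst]
  ring

theorem sub_mul_dd4_eq_add (f : ℝ → ℝ) (u s t w v : ℝ) (hsu : s ≠ u) (hsw : s ≠ w)
    (hsv : s ≠ v) (htu : t ≠ u) (htw : t ≠ w) (htv : t ≠ v) :
    (v - u) * dd4 f u s t v = (w - u) * dd4 f u s t w + (v - w) * dd4 f w s t v := by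
  rw [sub_mul_dd4 f hsu hsv htu htv, sub_mul_dd4 f hsu hsw htu htw,
    sub_mul_dd4 f hsw hsv htw htv]
  ring

theorem Delta3.dd4_nonneg {a b : ℝ} {f : ℝ → ℝ} (hf : Delta3 a b f) {t0 t1 t2 t3 : ℝ}
    (ha : a ≤ t0) (h01 : t0 < t1) (h12 : t1 < t2) (h23 : t2 < t3) (hb : t3 ≤ b) :
    0 ≤ dd4 f t0 t1 t2 t3 :=
  hf.2 t0 t1 t2 t3 ⟨ha, by linarith⟩ ⟨by linarith, by linarith⟩ ⟨by linarith, by linarith⟩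
    ⟨by linarith, hb⟩ h01.ne (h01.trans h12).ne (h01.trans (h12.trans h23)).ne h12.ne
    (h12.trans h23).ne h23.ne

theorem Delta3.sub_mul_dd4_le_extend_left {a b : ℝ} {f : ℝ → ℝ} (hf : Delta3 a b f)
    {u s t w v : ℝ} (ha : a ≤ u) (hus : u < s) (hst : s < t) (htw : t < w) (hwv : w < v)
    (hb : v ≤ b) : (v - w) * dd4 f w s t v ≤ (v - u) * dd4 f u s t v := by
  rw [sub_mul_dd4_eq_add f u s t w v hus.ne' (by linarith) (by linarith) (by linarith)
    htw.ne (by linarith), le_add_iff_nonneg_left]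
  exact mul_nonneg (by linarith) (hf.dd4_nonneg ha hus hst htw (by linarith))

theorem Delta3.sub_mul_dd4_le_extend_right {a b : ℝ} {f : ℝ → ℝ} (hf : Delta3 a b f)
    {u w s t v : ℝ} (ha : a ≤ u) (huw : u < w) (hws : w < s) (hst : s < t) (htv : t < v)
    (hb : v ≤ b) : (w - u) * dd4 f u s t w ≤ (v - u) * dd4 f u s t v := by
  rw [sub_mul_dd4_eq_add f u s t w v (by linarith) hws.ne' (by linarith) (by linarith)
    (by linarith) htv.ne, le_add_iff_nonneg_right]
  exact mul_nonneg (by linarith) (hf.dd4_nonneg (by linarith) hws hst htv hb)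

theorem statement6_general (a b : ℝ) (x0 x1 x2 x3 x4 x5 : ℝ)
    (h54 : x5 < x4) (h43 : x4 < x3) (h21 : x2 < x1) (h10 : x1 < x0)
    (hm0 : x0 ∈ Set.Icc a b) (hm5 : x5 ∈ Set.Icc a b)
    (f : ℝ → ℝ) (hf : Delta3 a b f)
    (y : ℝ) (hy : y ∈ Set.Ioo x3 x2) :
    dd4 f x4 x3 x2 x1 ≤
      ((y - x4) * (x2 - x5)) / ((x2 - y) * (x1 - x4)) * dd4 f x5 x4 x3 x2 +
      ((x1 - y) * (x0 - x3)) / ((y - x3) * (x1 - x4)) * dd4 f x3 x2 x1 x0 := by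
  obtain ⟨h3y, hy2⟩ := hy
  have hC : (x1 - x4) * dd4 f x4 x3 x2 x1 =
      (y - x4) * dd4 f y x4 x3 x2 + (x1 - y) * dd4 f x3 x2 x1 y := by
    rw [sub_mul_dd4_eq_add f x4 x3 x2 y x1 (by linarith) (by linarith) (by linarith)
      (by linarith) (by linarith) (by linarith), ← dd4_rotate f x4, dd4_rotate f x3]
  have hR : (x2 - y) * dd4 f y x4 x3 x2 ≤ (x2 - x5) * dd4 f x5 x4 x3 x2 :=
    hf.sub_mul_dd4_le_extend_left hm5.1 h54 h43 h3y hy2 (by linarith [hm0.2])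
  have hS : (y - x3) * dd4 f x3 x2 x1 y ≤ (x0 - x3) * dd4 f x3 x2 x1 x0 :=
    hf.sub_mul_dd4_le_extend_right (by linarith [hm5.1]) h3y hy2 h21 h10 hm0.2
  have h14 : 0 < x1 - x4 := by linarith
  have h2y : 0 < x2 - y := by linarith
  have hy3 : 0 < y - x3 := by linarith
  calc dd4 f x4 x3 x2 x1
      = ((y - x4) / (x2 - y) * ((x2 - y) * dd4 f y x4 x3 x2) +
          (x1 - y) / (y - x3) * ((y - x3) * dd4 f x3 x2 x1 y)) / (x1 - x4) := by
        field_simp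
        linear_combination hC
    _ ≤ ((y - x4) / (x2 - y) * ((x2 - x5) * dd4 f x5 x4 x3 x2) +
          (x1 - y) / (y - x3) * ((x0 - x3) * dd4 f x3 x2 x1 x0)) / (x1 - x4) := by
        gcongr
        · exact div_nonneg (by linarith) h2y.le
        · exact div_nonneg (by linarith) hy3.le
    _ = _ := by
        field_simp

/-- Consequence of identity (11) for 3-monotone `f`: for every `y ∈ (x₃, x₂)`,
`Δ₄ ≤ ((y−x₄)(x₂−x₅))/((x₂−y)(x₁−x₄))·Δ₅ + ((x₁−y)(x₀−x₃))/((y−x₃)(x₁−x₄))·Δ₃`. -/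
theorem statement6 (a b : ℝ) (x0 x1 x2 x3 x4 x5 : ℝ)
    (h54 : x5 < x4) (h43 : x4 < x3) (h32 : x3 < x2) (h21 : x2 < x1) (h10 : x1 < x0)
    (hm0 : x0 ∈ Set.Icc a b) (hm1 : x1 ∈ Set.Icc a b) (hm2 : x2 ∈ Set.Icc a b)
    (hm3 : x3 ∈ Set.Icc a b) (hm4 : x4 ∈ Set.Icc a b) (hm5 : x5 ∈ Set.Icc a b)
    (f : ℝ → ℝ) (hf : Delta3 a b f)
    (y : ℝ) (hy : y ∈ Set.Ioo x3 x2) :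
    dd4 f x4 x3 x2 x1 ≤
      ((y - x4) * (x2 - x5)) / ((x2 - y) * (x1 - x4)) * dd4 f x5 x4 x3 x2 +
      ((x1 - y) * (x0 - x3)) / ((y - x3) * (x1 - x4)) * dd4 f x3 x2 x1 x0 :=
  statement6_general a b x0 x1 x2 x3 x4 x5 h54 h43 h21 h10 hm0 hm5 f hf y hy
end

section
/- Let n, q ∈ ℕ with 1 ≤ q ≤ n, let a = a_n < a_{n-1} < … < a_1 < a_0 = b be reals, and let g : [a,b] → ℝ. Define the piecewise-polynomial function S_q : [a,b] → ℝ by S_q(x) = L(x; a_q,…,a_0; g) for x ∈ [a_q, b], and S_q(x) = L(x; a_j,…,a_{j-q}; g) for x ∈ [a_j, a_{j-1}) and j = q+1,…,n, where L(x; t_0,…,t_q; g) denotes the Lagrange interpolation polynomial of degree ≤ q to g at the nodes t_0,…,t_q. For j = q,…,n let Ψ_q(x, a_j) := Π_{k=j−q+1}^{j} (x − a_k) if x > a_j and Ψ_q(x, a_j) := 0 if x ≤ a_j, and set Ψ_q(x, a_{q-1}) :≡ 0. Then for all x ∈ [a,b]: S_q(x) = L(x; a_n,…,a_{n-q+1};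 g) + Σ_{j=q}^{n} [a_j, a_{j-1}, …, a_{j-q}; g]·( Ψ_q(x, a_j) − Ψ_q(x, a_{j-1}) ). -/
/-- Evaluation at `x` of the Lagrange interpolation polynomial of `g`
at the (distinct) nodes `t 0, …, t (m-1)`. -/
noncomputable def lagEval {m : ℕ} (g : ℝ → ℝ) (t : Fin m → ℝ) (x : ℝ) : ℝ :=
  ∑ i, g (t i) * ∏ l ∈ Finset.univ.erase i, ((x - t l) / (t i - t l))

/-- Divided difference `[t 0, …, t (m-1); g]` at `m` (distinct) points. -/
noncomputable def divDiff {m : ℕ} (g : ℝ → ℝ) (t : Fin m → ℝ) : ℝ :=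
  ∑ i, g (t i) / ∏ l ∈ Finset.univ.erase i, (t i - t l)

/-- `Ψ_q(x, a_j) = ∏_{k=j-q+1}^{j} (x - a_k)` for `x > a_j` (and `0` otherwise),
extended by `Ψ_q(·, a_{q-1}) ≡ 0`. -/
noncomputable def PsiQ (a : ℕ → ℝ) (q j : ℕ) (x : ℝ) : ℝ :=
  if q ≤ j ∧ a j < x then ∏ k ∈ Finset.Icc (j - q + 1) j, (x - a k) else 0

/-!
Deleting a node `p` from injective nodes `t` changes the Lagrange interpolant by
`[t; g] · ∏_{l ≠ p} (x - t l)` (Newton's recursion). For the window `a_j, …, a_{j-q}`,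
deleting the last or the first node shows that `[a_j, …, a_{j-q}; g] · (Π_j - Π_{j-1})`, with
`Π_j(x) = ∏_{i<q} (x - a_{j-i})`, is the difference of the `q`-node interpolants on consecutive
windows. If `J ≥ q` is least with `a_J ≤ x`, then `Ψ_q(x, a_j) = Π_j(x)` for `j ≥ J` and `0`
for `j < J`, so the sum telescopes to `L(x; a_J, …, a_{J-q}; g) - L(x; a_n, …, a_{n-q+1}; g)`, and
`S_q(x) = L(x; a_J, …, a_{J-q}; g)`.
-/

open Finset Function

section Lagrange

variable {M : Type*} [CommMonoid M] {m : ℕ}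

theorem Fin.univ_erase_eq_map_succAboveEmb (p : Fin (m + 1)) :
    (univ : Finset (Fin (m + 1))).erase p = univ.map p.succAboveEmb := by
  rw [Fin.univ_succAbove m p, erase_cons]

theorem Fin.univ_erase_succAbove (p : Fin (m + 1)) (i : Fin m) :
    (univ : Finset (Fin (m + 1))).erase (p.succAbove i)
      = insert p ((univ.erase i).map p.succAboveEmb) := by
  rw [map_erase, ← Fin.univ_erase_eq_map_succAboveEmb, erase_right_comm]
  exact (insert_erase (mem_erase.2 ⟨(Fin.succAbove_ne p i).symm, mem_univ _⟩)).symm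

theorem Fin.prod_univ_erase (f : Fin (m + 1) → M) (p : Fin (m + 1)) :
    ∏ l ∈ univ.erase p, f l = ∏ l : Fin m, f (p.succAbove l) := by
  rw [Fin.univ_erase_eq_map_succAboveEmb, prod_map]
  rfl

theorem Fin.prod_univ_erase_succAbove (f : Fin (m + 1) → M) (p : Fin (m + 1)) (i : Fin m) :
    ∏ l ∈ univ.erase (p.succAbove i), f l
      = f p * ∏ l ∈ univ.erase i, f (p.succAbove l) := by
  rw [Fin.univ_erase_succAbove, prod_insert (by simp [Fin.succAbove_ne]), prod_map]
  rfl

theorem prod_lagrangeBasis_succAbove {t : Fin (m + 1) → ℝ} (ht : Injective t)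
    (p : Fin (m + 1)) (i : Fin m) (x : ℝ) :
    ∏ l ∈ univ.erase (p.succAbove i), (x - t l) / (t (p.succAbove i) - t l)
      = ∏ l ∈ univ.erase i, (x - t (p.succAbove l)) / (t (p.succAbove i) - t (p.succAbove l))
        + (∏ l ∈ univ.erase p, (x - t l))
          / ∏ l ∈ univ.erase (p.succAbove i), (t (p.succAbove i) - t l) := by
  have hp : t (p.succAbove i) - t p ≠ 0 := sub_ne_zero.2 (ht.ne (Fin.succAbove_ne p i))
  have hi : ∏ l ∈ univ.erase i, (t (p.succAbove i) - t (p.succAbove l)) ≠ 0 :=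
    prod_ne_zero_iff.2 fun l hl ↦
      sub_ne_zero.2 ((ht.comp Fin.succAbove_right_injective).ne (ne_of_mem_erase hl).symm)
  -- with `u = t (p.succAbove i)`: `(x - t p) / (u - t p) = 1 + (x - u) / (u - t p)`
  rw [Fin.prod_univ_erase_succAbove, Fin.prod_univ_erase_succAbove, Fin.prod_univ_erase,
    ← mul_prod_erase univ (fun l ↦ x - t (p.succAbove l)) (mem_univ i), prod_div_distrib]
  field_simp
  rw [mul_comm]
  congr 1
  ring

theorem lagEval_eq_lagEval_succAbove_add {t : Fin (m + 1) → ℝ} (ht : Injective t)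
    (g : ℝ → ℝ) (p : Fin (m + 1)) (x : ℝ) :
    lagEval g t x
      = lagEval g (t ∘ p.succAbove) x + divDiff g t * ∏ l ∈ univ.erase p, (x - t l) := by
  simp only [lagEval, divDiff, Fin.sum_univ_succAbove _ p, prod_lagrangeBasis_succAbove ht,
    mul_add, sum_add_distrib, add_mul, sum_mul, comp_apply]
  rw [prod_div_distrib]
  simp only [div_mul_eq_mul_div, mul_div_assoc]
  ring

end Lagrange

section Windows

variable {a : ℕ → ℝ} {q j : ℕ}

theorem injective_window (hqj : q ≤ j) (ha : Set.InjOn a (Set.Icc (j - q) j)) :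
    Injective fun i : Fin (q + 1) => a (j - i) := by
  intro i i' h
  have := ha ⟨by omega, by omega⟩ ⟨by omega, by omega⟩ h
  exact Fin.ext (by omega)

theorem lagEval_window_eq_drop_last (g : ℝ → ℝ) (x : ℝ) (hqj : q ≤ j)
    (ha : Set.InjOn a (Set.Icc (j - q) j)) :
    lagEval g (fun i : Fin (q + 1) => a (j - i)) x
      = lagEval g (fun i : Fin q => a (j - i)) x
        + divDiff g (fun i : Fin (q + 1) => a (j - i)) * ∏ i : Fin q, (x - a (j - i)) := by
  rw [lagEval_eq_lagEval_succAbove_add (injective_window hqj ha) g (Fin.last q),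
    Fin.prod_univ_erase]
  simp only [comp_def, Fin.succAbove_last, Fin.val_castSucc]

theorem lagEval_window_eq_drop_first (g : ℝ → ℝ) (x : ℝ) (hqj : q < j)
    (ha : Set.InjOn a (Set.Icc (j - q) j)) :
    lagEval g (fun i : Fin (q + 1) => a (j - i)) x
      = lagEval g (fun i : Fin q => a (j - 1 - i)) x
        + divDiff g (fun i : Fin (q + 1) => a (j - i)) * ∏ i : Fin q, (x - a (j - 1 - i)) := by
  rw [lagEval_eq_lagEval_succAbove_add (injective_window hqj.le ha) g 0, Fin.prod_univ_erase]
  simp only [comp_def, Fin.succAbove_zero, Fin.val_succ, Nat.sub_add_eq, Nat.sub_right_comm j _ 1]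

theorem divDiff_window_mul_sub (g : ℝ → ℝ) (x : ℝ) (hqj : q < j)
    (ha : Set.InjOn a (Set.Icc (j - q) j)) :
    divDiff g (fun i : Fin (q + 1) => a (j - i))
        * (∏ i : Fin q, (x - a (j - i)) - ∏ i : Fin q, (x - a (j - 1 - i)))
      = lagEval g (fun i : Fin q => a (j - 1 - i)) x
        - lagEval g (fun i : Fin q => a (j - i)) x := by
  have := lagEval_window_eq_drop_last g x hqj.le ha
  have := lagEval_window_eq_drop_first g x hqj ha
  rw [mul_sub]
  linarith

end Windows

theorem Finset.prod_Icc_eq_prod_fin_sub {M : Type*} [CommMonoid M] (f : ℕ → M) {q j : ℕ}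
    (hqj : q ≤ j) : ∏ k ∈ Icc (j - q + 1) j, f k = ∏ i : Fin q, f (j - i) := by
  rw [Fin.prod_univ_eq_prod_range (fun i ↦ f (j - i)), range_eq_Ico,
    prod_Ico_reflect f 0 (by omega), ← Ico_add_one_right_eq_Icc]
  congr 2
  omega

theorem Finset.sum_Icc_sub_pred {G : Type*} [AddCommGroup G] (F : ℕ → G) {q n : ℕ}
    (hq : 1 ≤ q) (hqn : q ≤ n + 1) : ∑ j ∈ Icc q n, (F j - F (j - 1)) = F n - F (q - 1) := by
  obtain ⟨p, rfl⟩ : ∃ p, q = p + 1 := ⟨q - 1, by omega⟩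
  rw [← Ico_add_one_right_eq_Icc, ← sum_Ico_add' _ p n 1]
  simp only [Nat.add_sub_cancel]
  exact sum_Ico_sub F (by omega)

section PsiQ

variable {a : ℕ → ℝ} {q j : ℕ} {x : ℝ}

theorem psiQ_of_lt (h : j < q) : PsiQ a q j x = 0 := by
  simp [PsiQ, h.not_ge]

theorem psiQ_of_le (h : x ≤ a j) : PsiQ a q j x = 0 := by
  simp [PsiQ, h.not_gt]

theorem psiQ_eq_prod (hq : 1 ≤ q) (hqj : q ≤ j) (h : a j ≤ x) :
    PsiQ a q j x = ∏ i : Fin q, (x - a (j - i)) := by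
  unfold PsiQ
  split_ifs with hlt
  · exact prod_Icc_eq_prod_fin_sub _ hqj
  · have hx : a j = x := h.antisymm (not_lt.1 fun h' ↦ hlt ⟨hqj, h'⟩)
    exact (prod_eq_zero (mem_univ ⟨0, hq⟩) (by simp [hx])).symm

end PsiQ

theorem lagEval_add_sum_divDiff_mul_psiQ_sub {a : ℕ → ℝ} {n q J : ℕ} (g : ℝ → ℝ) {x : ℝ}
    (hq : 1 ≤ q) (hqJ : q ≤ J) (hJn : J ≤ n) (ha : StrictAntiOn a (Set.Iic n))
    (hJx : a J ≤ x) (hxJ : ∀ m, q ≤ m → m < J → x < a m) :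
    lagEval g (fun i : Fin q => a (n - i)) x
        + ∑ j ∈ Icc q n, divDiff g (fun i : Fin (q + 1) => a (j - i))
            * (PsiQ a q j x - PsiQ a q (j - 1) x)
      = lagEval g (fun i : Fin (q + 1) => a (J - i)) x := by
  have hinj (j : ℕ) (hj : j ≤ n) : Set.InjOn a (Set.Icc (j - q) j) :=
    ha.injOn.mono fun k hk ↦ hk.2.trans hj
  have hPsi (m : ℕ) (hmn : m ≤ n) (hqm : q ≤ m + 1) :
      PsiQ a q m x = if J ≤ m then ∏ i : Fin q, (x - a (m - i)) else 0 := by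
    split_ifs with hJm
    · exact psiQ_eq_prod hq (by omega) ((ha.antitoneOn (by simpa) (by simpa) hJm).trans hJx)
    · rcases Nat.lt_or_ge m q with hmq | hqm
      · exact psiQ_of_lt hmq
      · exact psiQ_of_le (hxJ m hqm (by omega)).le
  let F (m : ℕ) : ℝ :=
    if J ≤ m then lagEval g (fun i : Fin (q + 1) => a (J - i)) x
      - lagEval g (fun i : Fin q => a (m - i)) x else 0
  have hterm : ∀ j ∈ Icc q n, divDiff g (fun i : Fin (q + 1) => a (j - i))
      * (PsiQ a q j x - PsiQ a q (j - 1) x) = F j - F (j - 1) := by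
    intro j hj
    rw [mem_Icc] at hj
    rw [hPsi j hj.2 (by omega), hPsi (j - 1) (by omega) (by omega)]
    rcases lt_trichotomy j J with hjJ | rfl | hJj
    · simp [F, hjJ.not_ge, show ¬J ≤ j - 1 by omega]
    · simp only [F, le_refl, if_true, show ¬j ≤ j - 1 by omega, if_false,
        lagEval_window_eq_drop_last g x hj.1 (hinj j hj.2)]
      ring
    · simp only [F, hJj.le, show J ≤ j - 1 by omega, if_true,
        divDiff_window_mul_sub g x (by omega : q < j) (hinj j hj.2)]
      ring
  rw [sum_congr rfl hterm, sum_Icc_sub_pred F hq (by omega)]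
  simp only [F, hJn, show ¬J ≤ q - 1 by omega, if_true, if_false]
  ring

/-- Second representation of the piecewise Lagrange spline `S_q` by truncated
power functions (Proposition, second form). -/
theorem statement8 (n q : ℕ) (hq : 1 ≤ q) (hqn : q ≤ n) (a : ℕ → ℝ)
    (hdec : ∀ j < n, a (j + 1) < a j) (g : ℝ → ℝ) (S : ℝ → ℝ)
    (hS1 : ∀ x ∈ Set.Icc (a q) (a 0),
      S x = lagEval g (fun i : Fin (q + 1) => a (q - (i : ℕ))) x)
    (hS2 : ∀ j : ℕ, q + 1 ≤ j → j ≤ n → ∀ x ∈ Set.Ico (a j) (a (j - 1)),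
      S x = lagEval g (fun i : Fin (q + 1) => a (j - (i : ℕ))) x) :
    ∀ x ∈ Set.Icc (a n) (a 0),
      S x = lagEval g (fun i : Fin q => a (n - (i : ℕ))) x +
        ∑ j ∈ Finset.Icc q n,
          divDiff g (fun i : Fin (q + 1) => a (j - (i : ℕ))) *
            (PsiQ a q j x - PsiQ a q (j - 1) x) := by
  intro x hx
  have hex : ∃ m, q ≤ m ∧ a m ≤ x := ⟨n, hqn, hx.1⟩
  obtain ⟨J, ⟨hqJ, hJx⟩, hmin⟩ :
      ∃ J, (q ≤ J ∧ a J ≤ x) ∧ ∀ m < J, ¬(q ≤ m ∧ a m ≤ x) :=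
    ⟨Nat.find hex, Nat.find_spec hex, fun _ ↦ Nat.find_min hex⟩
  have hJn : J ≤ n := not_lt.1 fun h ↦ hmin n h ⟨hqn, hx.1⟩
  have hxJ (m : ℕ) (hqm : q ≤ m) (hmJ : m < J) : x < a m :=
    not_le.1 fun h ↦ hmin m hmJ ⟨hqm, h⟩
  have hSx : S x = lagEval g (fun i : Fin (q + 1) => a (J - i)) x := by
    rcases hqJ.eq_or_lt with rfl | hqJ
    · exact hS1 x ⟨hJx, hx.2⟩
    · exact hS2 J hqJ hJn x ⟨hJx, hxJ (J - 1) (by omega) (by omega)⟩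
  rw [hSx, lagEval_add_sum_divDiff_mul_psiQ_sub g hq hqJ hJn (strictAntiOn_Iic_of_succ_lt hdec)
    hJx hxJ]
end

section
/- Let h > 0, let u_0 < u_1 < … < u_5 be equidistant reals with u_{k+1} − u_k = h, all lying in [a,b], and let f ∈ Δ³[a,b]. Set D_k := [u_k, u_{k+1}, u_{k+2}, u_{k+3}; f] for k = 0, 1, 2, assume D_0 ≤ D_1 and D_2 < D_1, and define d := ( (u_1+u_2)·D_0 + (u_2+u_3)·D_1 + (u_3+u_4)·D_2 ) / ( 2(D_0 + D_1 + D_2) ). Then u_2 ≤ d ≤ u_3. -/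
/-!
With step `h`, `d - u₂ = h (D₁ - D₀ + 3 D₂) / (2 S)` and `u₃ - d = h (3 D₀ + D₁ - D₂) / (2 S)`,
where `S = D₀ + D₁ + D₂`. Three-monotonicity gives `D₀, D₂ ≥ 0`, so `S > 0`, and `D₀ ≤ D₁`,
`D₂ < D₁` make both numerators nonnegative.
-/

theorem Delta3.dd4_nonneg_of_lt {a b : ℝ} {f : ℝ → ℝ} (hf : Delta3 a b f) {t0 t1 t2 t3 : ℝ}
    (ht0 : t0 ∈ Set.Icc a b) (ht1 : t1 ∈ Set.Icc a b) (ht2 : t2 ∈ Set.Icc a b)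
    (ht3 : t3 ∈ Set.Icc a b) (h01 : t0 < t1) (h12 : t1 < t2) (h23 : t2 < t3) :
    0 ≤ dd4 f t0 t1 t2 t3 :=
  hf.2 t0 t1 t2 t3 ht0 ht1 ht2 ht3 h01.ne (h01.trans h12).ne (h01.trans (h12.trans h23)).ne
    h12.ne (h12.trans h23).ne h23.ne

theorem equidistant_center_mem_Icc {x h D0 D1 D2 : ℝ} (hh : 0 < h) (hD0 : 0 ≤ D0)
    (hD2 : 0 ≤ D2) (h01 : D0 ≤ D1) (h21 : D2 < D1) :
    ((2 * x - h) * D0 + (2 * x + h) * D1 + (2 * x + 3 * h) * D2) / (2 * (D0 + D1 + D2)) ∈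
      Set.Icc x (x + h) := by
  have hS : 0 < 2 * (D0 + D1 + D2) := by linarith
  rw [Set.mem_Icc, le_div_iff₀ hS, div_le_iff₀ hS]
  constructor <;> nlinarith

theorem statement12_general (a b h : ℝ) (hh : 0 < h) (u0 u1 u2 u3 u4 u5 : ℝ)
    (h1 : u1 = u0 + h) (h2 : u2 = u1 + h) (h3 : u3 = u2 + h)
    (h4 : u4 = u3 + h) (h5 : u5 = u4 + h)
    (hm0 : u0 ∈ Set.Icc a b) (hm1 : u1 ∈ Set.Icc a b) (hm2 : u2 ∈ Set.Icc a b)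
    (hm3 : u3 ∈ Set.Icc a b) (hm4 : u4 ∈ Set.Icc a b) (hm5 : u5 ∈ Set.Icc a b)
    (f : ℝ → ℝ) (hf : Delta3 a b f)
    (D0 D1 D2 : ℝ)
    (hD0 : D0 = dd4 f u0 u1 u2 u3)
    (hD2 : D2 = dd4 f u2 u3 u4 u5)
    (h01 : D0 ≤ D1) (h21 : D2 < D1)
    (d : ℝ)
    (hd : d = ((u1 + u2) * D0 + (u2 + u3) * D1 + (u3 + u4) * D2) /
        (2 * (D0 + D1 + D2))) :
    u2 ≤ d ∧ d ≤ u3 := by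
  have hD0_nonneg : 0 ≤ D0 :=
    hD0 ▸ hf.dd4_nonneg_of_lt hm0 hm1 hm2 hm3 (by linarith) (by linarith) (by linarith)
  have hD2_nonneg : 0 ≤ D2 :=
    hD2 ▸ hf.dd4_nonneg_of_lt hm2 hm3 hm4 hm5 (by linarith) (by linarith) (by linarith)
  have hd_center : d = ((2 * u2 - h) * D0 + (2 * u2 + h) * D1 + (2 * u2 + 3 * h) * D2) /
      (2 * (D0 + D1 + D2)) := by
    rw [hd]
    congr 1
    linear_combination (-D0) * h2 + (D1 + 2 * D2) * h3 + D2 * h4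
  rw [hd_center, h3]
  exact equidistant_center_mem_Icc hh hD0_nonneg hD2_nonneg h01 h21

/-- The center `d = d_j` of the parabola `P_j` lies in `[u₂, u₃]` (i.e. `d_j ∈ I_{j-1}`)
for equidistant points, when `D₀ ≤ D₁` and `D₂ < D₁`. -/
theorem statement12 (a b h : ℝ) (hh : 0 < h) (u0 u1 u2 u3 u4 u5 : ℝ)
    (h1 : u1 = u0 + h) (h2 : u2 = u1 + h) (h3 : u3 = u2 + h)
    (h4 : u4 = u3 + h) (h5 : u5 = u4 + h)
    (hm0 : u0 ∈ Set.Icc a b) (hm1 : u1 ∈ Set.Icc a b) (hm2 : u2 ∈ Set.Icc a b)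
    (hm3 : u3 ∈ Set.Icc a b) (hm4 : u4 ∈ Set.Icc a b) (hm5 : u5 ∈ Set.Icc a b)
    (f : ℝ → ℝ) (hf : Delta3 a b f)
    (D0 D1 D2 : ℝ)
    (hD0 : D0 = dd4 f u0 u1 u2 u3) (hD1 : D1 = dd4 f u1 u2 u3 u4)
    (hD2 : D2 = dd4 f u2 u3 u4 u5)
    (h01 : D0 ≤ D1) (h21 : D2 < D1)
    (d : ℝ)
    (hd : d = ((u1 + u2) * D0 + (u2 + u3) * D1 + (u3 + u4) * D2) /
        (2 * (D0 + D1 + D2))) :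
    u2 ≤ d ∧ d ≤ u3 :=
  statement12_general a b h hh u0 u1 u2 u3 u4 u5 h1 h2 h3 h4 h5 hm0 hm1 hm2 hm3 hm4 hm5 f hf D0 D1
    D2 hD0 hD2 h01 h21 d hd
end
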